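/- Let W be a standard Brownian motion, X^λ_s = W_s − s²/2 + λs, and let L_λ = sup(Z^λ ∩ [0,1)) be the last time before 1 at which X^λ attains its running infimum. Then there exist constants c > 0, x₀ and λ₀ such that for all x > x₀ and λ ≥ λ₀, P(L_λ ≥ x/λ²) ≤ e^{−cx}. -/

import Mathlib

open Set MeasureTheory ProbabilityTheory

/-- A standard Brownian motion on `[0,∞)` started at `0`. -/
def IsStdBrownianMotion {Ω : Type*} [MeasurableSpace Ω] (P : Measure Ω)
    (W : ℝ → Ω → ℝ) : Prop :=
  IsProbabilityMeasure P ∧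
  (∀ t, Measurable (W t)) ∧
  (∀ ω, W 0 ω = 0) ∧
  (∀ ω, ContinuousOn (fun t => W t ω) (Ici 0)) ∧
  (∀ s t : ℝ, 0 ≤ s → s ≤ t →
    Measure.map (fun ω => W t ω - W s ω) P = gaussianReal 0 (Real.toNNReal (t - s))) ∧
  (∀ n : ℕ, ∀ τ : Fin (n + 1) → ℝ, (∀ i, 0 ≤ τ i) → StrictMono τ →
    iIndepFun (m := fun _ => Real.measurableSpace)
      (fun i : Fin n => fun ω => W (τ i.succ) ω - W (τ i.castSucc) ω) P)

/-- `Z^λ(ω)`: the set of times `s ≥ 0` at which the drifted path `ω(·) + λ·`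
attains its running infimum. -/
noncomputable def runInfSet (ω : ℝ → ℝ) (l : ℝ) : Set ℝ :=
  {s : ℝ | 0 ≤ s ∧ ω s + l * s = sInf ((fun r => ω r + l * r) '' Icc 0 s)}

/-!
On the event `L_λ ≥ t` with `t = x/λ²` there is a running-infimum time `s ∈ (t/2, 1)`, so
`X^λ_s ≤ X^λ_0 = 0`, i.e. `W_s ≤ s²/2 - λs < -λs/2`. On the dyadic scale `T = t 2^k ∈ [s, 2s]`
the path `W` therefore drops below `-λT/4` before time `T`. The reflection inequality
`P(∃ s ≤ T, W_s < -a) ≤ 2 P(W_T ≤ -a)` (first-passage decomposition on finite grids, using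
independent symmetric increments, then continuity of paths) and the Gaussian tail bound give
probability at most `2 exp(-λ²T/32) = 2 exp(-x 2^k/32)` for scale `k`; summing over `k` yields
`4 exp(-x/32) ≤ exp(-x/64)` for large `x`.
-/

open scoped NNReal ENNReal

lemma exists_rat_mem_Ioo_lt_of_continuousOn {f : ℝ → ℝ} {T c s : ℝ} (hT : 0 < T)
    (hf : ContinuousOn f (Icc 0 T)) (hs : s ∈ Icc 0 T) (hfs : f s < c) :
    ∃ q : ℚ, (q : ℝ) ∈ Ioo 0 T ∧ f q < c := by
  obtain ⟨U, hUo, hsU, hU⟩ := mem_nhdsWithin.1 (hf s hs (Iio_mem_nhds hfs))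
  have hne : (U ∩ Ioo 0 T).Nonempty :=
    mem_closure_iff.1 (by rwa [closure_Ioo hT.ne]) U hUo hsU
  obtain ⟨q, hqU, hq⟩ := Rat.denseRange_cast.exists_mem_open (hUo.inter isOpen_Ioo) hne
  exact ⟨q, hq, hU ⟨hqU, Ioo_subset_Icc_self hq⟩⟩

lemma exists_mul_two_pow_mem_Icc {s t : ℝ} (ht : 0 < t) (hts : t ≤ 2 * s) :
    ∃ k : ℕ, t * 2 ^ k ∈ Icc s (2 * s) := by
  obtain ⟨k, hk, hk'⟩ := exists_nat_pow_near (x := 2 * s / t) ((one_le_div ht).2 hts) one_lt_two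
  rw [le_div_iff₀ ht] at hk
  rw [div_lt_iff₀ ht, pow_succ] at hk'
  exact ⟨k, by linarith, by linarith⟩

lemma tsum_ofReal_exp_neg_mul_two_pow_le {y : ℝ} (hy : 1 ≤ y) :
    ∑' k : ℕ, ENNReal.ofReal (Real.exp (-(y * 2 ^ k))) ≤
      2 * ENNReal.ofReal (Real.exp (-y)) := by
  have h_term : ∀ k : ℕ,
      ENNReal.ofReal (Real.exp (-(y * 2 ^ k))) ≤ ENNReal.ofReal (Real.exp (-y)) * 2⁻¹ ^ k := by
    intro k
    have hk : (k : ℝ) + 1 ≤ 2 ^ k := by exact_mod_cast Nat.lt_two_pow_self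
    calc ENNReal.ofReal (Real.exp (-(y * 2 ^ k)))
        ≤ ENNReal.ofReal (Real.exp (-y) * Real.exp (-1) ^ k) := by
          rw [← Real.exp_nat_mul, ← Real.exp_add]
          gcongr
          nlinarith
      _ ≤ ENNReal.ofReal (Real.exp (-y) * 2⁻¹ ^ k) := by
          gcongr
          linarith [Real.exp_neg_one_lt_half]
      _ = ENNReal.ofReal (Real.exp (-y)) * 2⁻¹ ^ k := by
          rw [ENNReal.ofReal_mul (Real.exp_pos _).le, ENNReal.ofReal_pow (by norm_num),
            ENNReal.ofReal_inv_of_pos two_pos, ENNReal.ofReal_ofNat]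
  calc ∑' k : ℕ, ENNReal.ofReal (Real.exp (-(y * 2 ^ k)))
      ≤ ∑' k : ℕ, ENNReal.ofReal (Real.exp (-y)) * 2⁻¹ ^ k := ENNReal.tsum_le_tsum h_term
    _ = 2 * ENNReal.ofReal (Real.exp (-y)) := by
        rw [ENNReal.tsum_mul_left, ENNReal.tsum_geometric, ENNReal.one_sub_inv_two, inv_inv,
          mul_comm]

lemma tsum_two_mul_ofReal_exp_le {x : ℝ} (hx : 192 ≤ x) :
    ∑' k : ℕ, 2 * ENNReal.ofReal (Real.exp (-(x / 32 * 2 ^ k))) ≤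
      ENNReal.ofReal (Real.exp (-(1 / 64) * x)) := by
  have h4 : (4 : ℝ) ≤ Real.exp (x / 64) := by linarith [Real.add_one_le_exp (x / 64)]
  calc ∑' k : ℕ, 2 * ENNReal.ofReal (Real.exp (-(x / 32 * 2 ^ k)))
      ≤ 2 * (2 * ENNReal.ofReal (Real.exp (-(x / 32)))) := by
        rw [ENNReal.tsum_mul_left]
        gcongr
        exact tsum_ofReal_exp_neg_mul_two_pow_le (by linarith)
    _ = ENNReal.ofReal (4 * Real.exp (-(x / 32))) := by
        rw [ENNReal.ofReal_mul (by norm_num), ← mul_assoc]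
        norm_num
    _ ≤ ENNReal.ofReal (Real.exp (x / 64) * Real.exp (-(x / 32))) := by gcongr
    _ = ENNReal.ofReal (Real.exp (-(1 / 64) * x)) := by rw [← Real.exp_add]; ring_nf

lemma inv_two_le_gaussianReal_Iic_zero (v : ℝ≥0) : 2⁻¹ ≤ gaussianReal 0 v (Iic 0) := by
  have h_symm : gaussianReal 0 v (Ici 0) = gaussianReal 0 v (Iic 0) := by
    conv_lhs => rw [← neg_zero, ← gaussianReal_map_neg]
    rw [Measure.map_apply measurable_neg measurableSet_Ici]
    congr 1
    ext x
    simp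
  have h_cover : 1 ≤ gaussianReal 0 v (Iic 0) + gaussianReal 0 v (Ici 0) := by
    rw [← measure_univ (μ := gaussianReal 0 v), ← Iic_union_Ici (a := (0 : ℝ))]
    exact measure_union_le _ _
  rw [h_symm, ← two_mul] at h_cover
  rwa [ENNReal.inv_le_iff_le_mul (by simp) (by simp)]

lemma measure_le_neg_le_of_map_eq_gaussianReal {Ω : Type*} [MeasurableSpace Ω] {P : Measure Ω}
    [IsProbabilityMeasure P] {X : Ω → ℝ} {v : ℝ≥0} (hv : v ≠ 0)
    (hX : P.map X = gaussianReal 0 v) {a : ℝ} (ha : 0 ≤ a) :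
    P {ω | X ω ≤ -a} ≤ ENNReal.ofReal (Real.exp (-a ^ 2 / (2 * v))) := by
  have hv_pos : (0 : ℝ) < v := by positivity
  -- Chernoff bound at the optimal parameter `t = -a / v`
  have h_int : Integrable (fun ω => Real.exp (-a / v * X ω)) P := by
    rw [← mgf_pos_iff, mgf_gaussianReal hX]
    exact Real.exp_pos _
  have ht : -a / v ≤ 0 := div_nonpos_of_nonpos_of_nonneg (neg_nonpos.2 ha) hv_pos.le
  have h := measure_le_le_exp_mul_mgf (-a) ht h_int
  rw [mgf_gaussianReal hX, ← Real.exp_add] at h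
  rw [← ofReal_measureReal]
  refine ENNReal.ofReal_le_ofReal (h.trans_eq ?_)
  congr 1
  field_simp
  ring

lemma measure_le_two_mul_measure_inter {Ω : Type*} [MeasurableSpace Ω] {P : Measure Ω}
    {A B : Set Ω} (h_prod : P (A ∩ B) = P A * P B) (hB : 2⁻¹ ≤ P B) :
    P A ≤ 2 * P (A ∩ B) :=
  calc P A = 2 * (P A * 2⁻¹) := by
        rw [mul_comm (P A), ← mul_assoc, ENNReal.mul_inv_cancel (by simp) (by simp), one_mul]
    _ ≤ 2 * P (A ∩ B) := by rw [h_prod]; gcongr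

lemma measure_exists_le_le_two_mul {Ω : Type*} [MeasurableSpace Ω] {P : Measure Ω} {n : ℕ}
    {Y : Fin n → Ω → ℝ} {Z : Ω → ℝ} (hY : ∀ i, Measurable (Y i)) (hZ : Measurable Z)
    (h_indep : ∀ j, IndepFun (fun ω (i : Finset.Iic j) => Y i ω) (fun ω => Z ω - Y j ω) P)
    (h_half : ∀ j, 2⁻¹ ≤ P {ω | Z ω - Y j ω ≤ 0}) (c : ℝ) :
    P {ω | ∃ j, Y j ω ≤ c} ≤ 2 * P {ω | Z ω ≤ c} := by
  -- `A j`: the path first drops to `c` at step `j`; `B j`: it ends no higher than at step `j`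
  set A : Fin n → Set Ω := fun j => {ω | Y j ω ≤ c ∧ ∀ i < j, c < Y i ω}
  set B : Fin n → Set Ω := fun j => {ω | Z ω - Y j ω ≤ 0}
  set M : ∀ j : Fin n, Set (Finset.Iic j → ℝ) := fun j =>
    {y | y ⟨j, Finset.mem_Iic.2 le_rfl⟩ ≤ c} ∩
      ⋂ (i : Finset.Iic j) (_ : (i : Fin n) < j), {y | c < y i}
  have hM : ∀ j, MeasurableSet (M j) := fun j =>
    (measurableSet_le (measurable_pi_apply _) measurable_const).inter <|
      .iInter fun i => .iInter fun _ => measurableSet_lt measurable_const (measurable_pi_apply i)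
  have hA_eq : ∀ j, A j = (fun ω (i : Finset.Iic j) => Y i ω) ⁻¹' M j := fun j => by
    ext ω
    simp only [A, M, Set.mem_preimage, Set.mem_inter_iff, Set.mem_iInter, Subtype.forall,
      Finset.mem_Iic]
    exact and_congr_right fun _ => ⟨fun h i _ hij => h i hij, fun h i hij => h i hij.le hij⟩
  have hA : ∀ j, MeasurableSet (A j) := fun j =>
    hA_eq j ▸ measurable_pi_lambda (fun ω (i : Finset.Iic j) => Y i ω) (fun i => hY i) (hM j)
  have hB : ∀ j, MeasurableSet (B j) := fun j => measurableSet_le (hZ.sub (hY j)) measurable_const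
  have h_disj : Pairwise (Function.onFun Disjoint A) := by
    refine pairwise_disjoint_on A |>.2 fun i j hij => Set.disjoint_left.2 fun ω hi hj => ?_
    exact (hj.2 i hij).not_ge hi.1
  have h_cover : {ω | ∃ j, Y j ω ≤ c} ⊆ ⋃ j, A j := by
    rintro ω ⟨j, hj⟩
    obtain ⟨k, hk, hmin⟩ := wellFounded_lt.has_min {j | Y j ω ≤ c} ⟨j, hj⟩
    exact Set.mem_iUnion.2 ⟨k, hk, fun i hik => not_le.1 fun hi => hmin i hi hik⟩
  have h_prod : ∀ j, P (A j ∩ B j) = P (A j) * P (B j) := fun j => by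
    rw [hA_eq]
    exact (h_indep j).measure_inter_preimage_eq_mul _ (Iic 0) (hM j) measurableSet_Iic
  calc P {ω | ∃ j, Y j ω ≤ c}
      ≤ ∑ j, P (A j) := (measure_mono h_cover).trans (measure_iUnion_fintype_le P A)
    _ ≤ ∑ j, 2 * P (A j ∩ B j) :=
        Finset.sum_le_sum fun j _ => measure_le_two_mul_measure_inter (h_prod j) (h_half j)
    _ = 2 * P (⋃ j, A j ∩ B j) := by
        rw [← Finset.mul_sum, measure_iUnion (h_disj.mono fun i j h => h.mono inter_subset_left
          inter_subset_left) fun j => (hA j).inter (hB j), tsum_fintype]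
    _ ≤ 2 * P {ω | Z ω ≤ c} := by
        gcongr
        exact Set.iUnion_subset fun j ω ⟨hAj, hBj⟩ => by
          simp only [A, B, Set.mem_ofPred_eq] at hAj hBj ⊢; linarith [hAj.1]

namespace IsStdBrownianMotion

variable {Ω : Type*} [MeasurableSpace Ω] {P : Measure Ω} {W : ℝ → Ω → ℝ}

lemma map_eq_gaussianReal (hW : IsStdBrownianMotion P W) {t : ℝ} (ht : 0 ≤ t) :
    P.map (W t) = gaussianReal 0 t.toNNReal := by
  simpa [hW.2.2.1] using hW.2.2.2.2.1 0 t le_rfl ht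

lemma inv_two_le_measure_sub_nonpos (hW : IsStdBrownianMotion P W) {s t : ℝ} (hs : 0 ≤ s)
    (hst : s ≤ t) : 2⁻¹ ≤ P {ω | W t ω - W s ω ≤ 0} := by
  have h := inv_two_le_gaussianReal_Iic_zero (t - s).toNNReal
  rwa [← hW.2.2.2.2.1 s t hs hst, Measure.map_apply (by exact (hW.2.1 t).sub (hW.2.1 s))
    measurableSet_Iic] at h

lemma indepFun_grid (hW : IsStdBrownianMotion P W) {n : ℕ} {τ : Fin (n + 2) → ℝ}
    (hτ : StrictMono τ) (hτ0 : τ 0 = 0) (j : Fin (n + 1)) :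
    IndepFun (fun ω (i : Finset.Iic j) => W (τ (i : Fin (n + 1)).succ) ω)
      (fun ω => W (τ (Fin.last _)) ω - W (τ j.succ) ω) P := by
  set D : Fin (n + 1) → Ω → ℝ := fun i ω => W (τ i.succ) ω - W (τ i.castSucc) ω
  have hD : iIndepFun D P :=
    hW.2.2.2.2.2 (n + 1) τ (fun i => hτ0 ▸ hτ.monotone (Fin.zero_le i)) hτ
  have h_disj : Disjoint (Finset.Iic j) (Finset.Ioi j) :=
    Finset.disjoint_left.2 fun _ hl hl' =>
      absurd (Finset.mem_Iic.1 hl) (not_le.2 (Finset.mem_Ioi.1 hl'))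
  have h_past : ∀ i ω, W (τ i.succ) ω = ∑ l ∈ Finset.Iic i, D l ω := fun i ω => by
    rw [Fin.sum_Iic_sub i (fun k => W (τ k) ω), hτ0, hW.2.2.1, sub_zero]
  have h_future : ∀ ω,
      W (τ (Fin.last _)) ω - W (τ j.succ) ω = ∑ l ∈ Finset.Ioi j, D l ω := fun ω => by
    have h_split : Finset.Iic j ∪ Finset.Ioi j = Finset.univ := by
      ext l
      simp [le_or_gt]
    rw [← Fin.succ_last, h_past, h_past, ← Fin.top_eq_last, Finset.Iic_top, ← h_split,
      Finset.sum_union h_disj]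
    ring
  have h := (hD.indepFun_finset _ _ h_disj fun i => (hW.2.1 _).sub (hW.2.1 _)).comp
    (φ := fun y (i : Finset.Iic j) =>
      ∑ l ∈ (Finset.Iic (i : Fin (n + 1))).subtype (· ∈ Finset.Iic j), y l)
    (ψ := fun y => ∑ l, y l) (by fun_prop) (by fun_prop)
  refine h.congr (.of_forall fun ω => ?_) (.of_forall fun ω => ?_)
  · funext i
    simp only [Function.comp_apply]
    rw [h_past, Finset.sum_subtype_eq_sum_filter (fun l => D l ω), Finset.filter_true_of_mem]
    exact fun l hl => Finset.mem_Iic.2 ((Finset.mem_Iic.1 hl).trans (Finset.mem_Iic.1 i.2))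
  · exact ((h_future ω).trans (Finset.sum_coe_sort _ _).symm).symm

lemma measure_exists_grid_le_le (hW : IsStdBrownianMotion P W) {n : ℕ} {τ : Fin (n + 2) → ℝ}
    (hτ : StrictMono τ) (hτ0 : τ 0 = 0) (c : ℝ) :
    P {ω | ∃ j : Fin (n + 1), W (τ j.succ) ω ≤ c} ≤
      2 * P {ω | W (τ (Fin.last _)) ω ≤ c} :=
  measure_exists_le_le_two_mul (fun _ => hW.2.1 _) (hW.2.1 _) (hW.indepFun_grid hτ hτ0)
    (fun _ => hW.inv_two_le_measure_sub_nonpos (hτ0 ▸ hτ.monotone (Fin.zero_le _))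
      (hτ.monotone (Fin.le_last _))) c

lemma measure_exists_finset_le_le (hW : IsStdBrownianMotion P W) {T : ℝ} (hT : 0 < T)
    {F : Finset ℝ} (hF : ∀ q ∈ F, q ∈ Ioc 0 T) (c : ℝ) :
    P {ω | ∃ q ∈ F, W q ω ≤ c} ≤ 2 * P {ω | W T ω ≤ c} := by
  classical
  set H := insert 0 (insert T F)
  have hH : ∀ q ∈ H, q ∈ Icc 0 T := by
    simp only [H, Finset.mem_insert]
    rintro q (rfl | rfl | hq)
    exacts [⟨le_rfl, hT.le⟩, ⟨hT.le, le_rfl⟩, Ioc_subset_Icc_self (hF q hq)]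
  obtain ⟨n, hn⟩ : ∃ n, H.card = n + 2 := Nat.exists_eq_add_of_le' <|
    Finset.one_lt_card.2 ⟨0, by simp [H], T, by simp [H], hT.ne⟩
  set τ := H.orderEmbOfFin hn
  have hτH : ∀ q ∈ H, ∃ k, τ k = q := fun q hq => by
    rw [← Finset.mem_coe, ← H.range_orderEmbOfFin hn] at hq
    exact hq
  have hτ0 : τ 0 = 0 := by
    obtain ⟨k, hk⟩ := hτH 0 (by simp [H])
    exact le_antisymm (hk ▸ τ.monotone (Fin.zero_le k)) (hH _ (H.orderEmbOfFin_mem hn 0)).1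
  have hτT : τ (Fin.last _) = T := by
    obtain ⟨k, hk⟩ := hτH T (by simp [H])
    exact le_antisymm (hH _ (H.orderEmbOfFin_mem hn _)).2 (hk ▸ τ.monotone (Fin.le_last k))
  refine le_trans (measure_mono ?_) (hτT ▸ hW.measure_exists_grid_le_le τ.strictMono hτ0 c)
  rintro ω ⟨q, hq, hWq⟩
  obtain ⟨k, rfl⟩ := hτH q (by simp [H, hq])
  obtain ⟨j, rfl⟩ := Fin.exists_succ_eq.2 fun hk : k = 0 => (hF _ hq).1.ne' (hk ▸ hτ0)
  exact ⟨j, hWq⟩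

lemma measure_exists_lt_le (hW : IsStdBrownianMotion P W) {T : ℝ} (hT : 0 < T) (c : ℝ) :
    P {ω | ∃ s ∈ Icc 0 T, W s ω < c} ≤ 2 * P {ω | W T ω ≤ c} := by
  classical
  -- by continuity of paths the event is detected at rational times, finitely many at a time
  set E : Finset ℚ → Set Ω := fun F =>
    {ω | ∃ q ∈ (F.image ((↑) : ℚ → ℝ)).filter (· ∈ Ioc 0 T), W q ω ≤ c}
  have h_cover : {ω | ∃ s ∈ Icc 0 T, W s ω < c} ⊆ ⋃ F, E F := by
    rintro ω ⟨s, hs, hWs⟩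
    obtain ⟨q, hq, hWq⟩ := exists_rat_mem_Ioo_lt_of_continuousOn hT
      ((hW.2.2.2.1 ω).mono Icc_subset_Ici_self) hs hWs
    refine Set.mem_iUnion.2 ⟨{q}, q, Finset.mem_filter.2 ⟨?_, Ioo_subset_Ioc_self hq⟩, ?_⟩
    exacts [Finset.mem_image_of_mem _ (Finset.mem_singleton_self q), hWq.le]
  have h_mono : Monotone E := fun F G hFG ω ⟨q, hq, hWq⟩ =>
    ⟨q, Finset.filter_subset_filter _ (Finset.image_subset_image hFG) hq, hWq⟩
  calc P {ω | ∃ s ∈ Icc 0 T, W s ω < c}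
      ≤ P (⋃ F, E F) := measure_mono h_cover
    _ = ⨆ F, P (E F) := h_mono.directed_le.measure_iUnion
    _ ≤ 2 * P {ω | W T ω ≤ c} := iSup_le fun F =>
        hW.measure_exists_finset_le_le hT (fun q hq => (Finset.mem_filter.1 hq).2) c

lemma measure_exists_lt_neg_le (hW : IsStdBrownianMotion P W) {T a : ℝ} (hT : 0 < T)
    (ha : 0 ≤ a) :
    P {ω | ∃ s ∈ Icc 0 T, W s ω < -a} ≤
      2 * ENNReal.ofReal (Real.exp (-a ^ 2 / (2 * T))) := by
  have := hW.1
  have h := measure_le_neg_le_of_map_eq_gaussianReal (by simpa using hT)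
    (hW.map_eq_gaussianReal hT.le) ha
  rw [Real.coe_toNNReal _ hT.le] at h
  exact (hW.measure_exists_lt_le hT (-a)).trans (by gcongr)

end IsStdBrownianMotion

lemma add_mul_le_of_mem_runInfSet {f : ℝ → ℝ} {l s : ℝ} (hs : s ∈ runInfSet f l)
    (hf : ContinuousOn f (Icc 0 s)) : f s + l * s ≤ f 0 := by
  have h_bdd : BddBelow ((fun r => f r + l * r) '' Icc 0 s) :=
    (isCompact_Icc.image_of_continuousOn (hf.add (by fun_prop))).bddBelow
  rw [hs.2]
  simpa using csInf_le h_bdd ⟨0, ⟨le_rfl, hs.1⟩, rfl⟩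

lemma exists_lt_neg_of_le_sSup_runInfSet {f : ℝ → ℝ} (hf : ContinuousOn f (Ici 0))
    (hf0 : f 0 = 0) {lam t : ℝ} (hlam : 1 ≤ lam) (ht : 0 < t)
    (h : t ≤ sSup (runInfSet (fun u => f u - u ^ 2 / 2) lam ∩ Ico 0 1)) :
    ∃ k : ℕ, ∃ s ∈ Icc 0 (t * 2 ^ k), f s < -(lam * (t * 2 ^ k) / 4) := by
  have h0 : (0 : ℝ) ∈ runInfSet (fun u => f u - u ^ 2 / 2) lam ∩ Ico 0 1 :=
    ⟨⟨le_rfl, by rw [Icc_self, image_singleton, csInf_singleton]⟩, le_rfl, one_pos⟩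
  obtain ⟨s, ⟨hsZ, hs0, hs1⟩, hts⟩ :=
    exists_lt_of_lt_csSup ⟨0, h0⟩ (by linarith : t / 2 < _)
  have h_inf : f s - s ^ 2 / 2 + lam * s ≤ 0 := by
    simpa [hf0] using
      add_mul_le_of_mem_runInfSet hsZ ((hf.mono Icc_subset_Ici_self).sub (by fun_prop))
  obtain ⟨k, hk, hk'⟩ := exists_mul_two_pow_mem_Icc (s := s) ht (by linarith)
  refine ⟨k, s, ⟨hs0, hk⟩, ?_⟩
  -- `s < 1 ≤ λ` makes the drift `λs - s²/2` exceed `λs/2`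
  nlinarith [mul_pos (by linarith : 0 < s) (by linarith : 0 < lam - s)]

/-- With `X^λ_s = W_s − s²/2 + λs` and `L_λ = sup(Z^λ ∩ [0,1))` the last time before `1`
at which `X^λ` attains its running infimum, there exist `c > 0`, `x₀` and `λ₀` such that
for all `x > x₀` and `λ ≥ λ₀`, `P(L_λ ≥ x/λ²) ≤ e^{−cx}`. -/
theorem left_endpoint_tail {Ω : Type*} [MeasurableSpace Ω] (P : Measure Ω)
    (W : ℝ → Ω → ℝ) (hW : IsStdBrownianMotion P W) :
    ∃ c > (0 : ℝ), ∃ x0 lam0 : ℝ, ∀ x : ℝ, x0 < x → ∀ lam : ℝ, lam0 ≤ lam →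
      P {ω | x / lam ^ 2 ≤
          sSup (runInfSet (fun u => W u ω - u ^ 2 / 2) lam ∩ Ico 0 1)} ≤
        ENNReal.ofReal (Real.exp (-c * x)) := by
  refine ⟨1 / 64, by norm_num, 192, 1, fun x hx lam hlam => ?_⟩
  have ht : 0 < x / lam ^ 2 := by positivity
  set B : ℕ → Set Ω := fun k =>
    {ω | ∃ s ∈ Icc 0 (x / lam ^ 2 * 2 ^ k), W s ω < -(lam * (x / lam ^ 2 * 2 ^ k) / 4)}
  have h_block : ∀ k, P (B k) ≤ 2 * ENNReal.ofReal (Real.exp (-(x / 32 * 2 ^ k))) := fun k => by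
    convert hW.measure_exists_lt_neg_le (T := x / lam ^ 2 * 2 ^ k)
      (a := lam * (x / lam ^ 2 * 2 ^ k) / 4) (by positivity) (by positivity) using 4
    field_simp
    ring
  calc P {ω | x / lam ^ 2 ≤ sSup (runInfSet (fun u => W u ω - u ^ 2 / 2) lam ∩ Ico 0 1)}
      ≤ P (⋃ k, B k) := measure_mono fun ω hω => Set.mem_iUnion.2 <|
        exists_lt_neg_of_le_sSup_runInfSet (hW.2.2.2.1 ω) (hW.2.2.1 ω) hlam ht hω
    _ ≤ ∑' k, 2 * ENNReal.ofReal (Real.exp (-(x / 32 * 2 ^ k))) :=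
        (measure_iUnion_le B).trans (ENNReal.tsum_le_tsum h_block)
    _ ≤ ENNReal.ofReal (Real.exp (-(1 / 64) * x)) := tsum_two_mul_ofReal_exp_le hx.le
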